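/- For each i ∈ [n] let f_i: ℝ → ℝ be convex and differentiable, and for each ordered pair i ≠ j let g_ij: ℝ² → ℝ be convex, differentiable, and symmetric (g_ij(a,b) = g_ji(b,a)). Define Φ(x) := ∑_i f_i(x_i) + ½ ∑_{i≠j} max{g_ij(x_i,x_j), 0}, and assume Φ attains its minimum on ℝⁿ. Consider the dynamics x_i^{k+1} = x_i^k − α^k (f_i'(x_i^k) + ∑_{j ∈ N_i(x^k)} ∂g_ij/∂x_i (x_i^k, x_j^k)), i ∈ [n], where α^k = γ_k / ‖g^k‖, g^k ∈ ℝⁿ is the vector with components g_i^k = f_i'(x_i^k) + ∑_{j ∈ N_i(x^k)} ∂g_ij/∂x_i (x_i^k, x_j^k), assumed nonzero for every k, and γ_k > 0 satisfies lim_k γ_k = 0, ∑_k γ_k = ∞ and ∑_k γ_k² < ∞. Then the sequence {x^k} converges to a global minimizer x* of Φ. -/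

import Mathlib

/-!
The vector `g^k` is a subgradient of the convex function `Φ` at `x^k`: for an active pair
(`g_ij > 0`) the ordered terms `(i, j)` and `(j, i)` contribute `∂₁g_ij` and, by symmetry, `∂₂g_ij`,
together the full gradient of `g_ij`, while an inactive pair contributes `0 ∈ ∂ max(·, 0)`.

For the normalized step and any minimizer `w`,
`‖x^{k+1} - w‖² + 2 (γ_k / ‖g^k‖) (Φ(x^k) - Φ(w)) ≤ ‖x^k - w‖² + γ_k²`,
so `‖x^k - w‖` converges and `∑ (γ_k / ‖g^k‖) (Φ(x^k) - Φ(w)) < ∞`. Hence the iterates are bounded,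
so are the subgradients, and `∑ γ_k / ‖g^k‖ = ∞`; thus `Φ(x^k)` comes arbitrarily close to `min Φ`
infinitely often, and a limit point of such a subsequence is a minimizer `x*`. As `‖x^k - x*‖`
converges and vanishes along that subsequence, `x^k → x*`.
-/

open Filter Topology Finset Metric

theorem summable_and_exists_tendsto_of_succ_add_le {a d e : ℕ → ℝ} (ha : ∀ k, 0 ≤ a k)
    (hd : ∀ k, 0 ≤ d k) (he0 : ∀ k, 0 ≤ e k) (he : Summable e)
    (hle : ∀ k, a (k + 1) + d k ≤ a k + e k) :
    Summable d ∧ ∃ l, Tendsto a atTop (𝓝 l) := by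
  set v : ℕ → ℝ := fun k => a k + ∑ i ∈ range k, (d i - e i)
  have hv_anti : Antitone v := antitone_nat_of_succ_le fun k => by
    simp only [v, sum_range_succ]
    linarith [hle k]
  have hsum_le : ∀ k, ∑ i ∈ range k, d i ≤ v k + ∑' i, e i := fun k => by
    simp only [v, sum_sub_distrib]
    linarith [ha k, he.sum_le_tsum (range k) fun i _ => he0 i]
  have hv_bdd : BddBelow (Set.range v) := ⟨-∑' i, e i, by
    rintro _ ⟨k, rfl⟩
    linarith [hsum_le k, sum_nonneg fun i (_ : i ∈ range k) => hd i]⟩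
  have hds : Summable d :=
    summable_of_sum_range_le (c := v 0 + ∑' i, e i) hd fun k =>
      (hsum_le k).trans (by linarith [hv_anti k.zero_le])
  refine ⟨hds, _, ((tendsto_atTop_ciInf hv_anti hv_bdd).sub hds.hasSum.tendsto_sum_nat).add
    he.hasSum.tendsto_sum_nat |>.congr fun k => ?_⟩
  simp only [v, sum_sub_distrib]
  ring

theorem frequently_lt_of_summable_mul {w c : ℕ → ℝ} (hw : ∀ k, 0 ≤ w k) (hw_not : ¬Summable w)
    (hwc : Summable fun k => w k * c k) {ε : ℝ} (hε : 0 < ε) : ∃ᶠ k in atTop, c k < ε := by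
  refine fun hc => hw_not ((hwc.div_const ε).of_norm_bounded_eventually_nat ?_)
  filter_upwards [hc] with k hk
  rw [Real.norm_of_nonneg (hw k), le_div_iff₀ hε]
  exact mul_le_mul_of_nonneg_left (not_lt.1 hk) (hw k)

section Metric

variable {X : Type*} [PseudoMetricSpace X]

theorem exists_subseq_tendsto_le_of_frequently_lt [ProperSpace X] {Φ : X → ℝ} (hΦ : Continuous Φ)
    {x : ℕ → X} (hx : Bornology.IsBounded (Set.range x)) {m : ℝ}
    (hfreq : ∀ ε > 0, ∃ᶠ k in atTop, Φ (x k) < m + ε) :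
    ∃ (xs : X) (φ : ℕ → ℕ), StrictMono φ ∧ Tendsto (x ∘ φ) atTop (𝓝 xs) ∧ Φ xs ≤ m := by
  obtain ⟨φ, hφ, hφm⟩ := extraction_forall_of_frequently fun n : ℕ =>
    hfreq (1 / (n + 1)) Nat.one_div_pos_of_nat
  obtain ⟨xs, -, ψ, hψ, hxψ⟩ := tendsto_subseq_of_bounded hx fun n => Set.mem_range_self (φ n)
  refine ⟨xs, φ ∘ ψ, hφ.comp hψ, hxψ, le_of_tendsto_of_tendsto' ((hΦ.tendsto xs).comp hxψ) ?_
    fun n => (hφm (ψ n)).le⟩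
  simpa using (tendsto_one_div_add_atTop_nhds_zero_nat.comp hψ.tendsto_atTop).const_add m

theorem tendsto_of_tendsto_dist_of_subseq {x : ℕ → X} {p : X} {l : ℝ}
    (hl : Tendsto (fun k => dist (x k) p) atTop (𝓝 l)) {φ : ℕ → ℕ} (hφ : Tendsto φ atTop atTop)
    (hxφ : Tendsto (x ∘ φ) atTop (𝓝 p)) : Tendsto x atTop (𝓝 p) := by
  have hl0 : l = 0 := tendsto_nhds_unique (hl.comp hφ) (tendsto_iff_dist_tendsto_zero.1 hxφ)
  exact tendsto_iff_dist_tendsto_zero.2 (hl0 ▸ hl)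

end Metric

section Subgradient

variable {E : Type*} [NormedAddCommGroup E] [InnerProductSpace ℝ E]

def IsSubgradientAt (Φ : E → ℝ) (x G : E) : Prop :=
  ∀ y, Φ x + inner ℝ G (y - x) ≤ Φ y

variable {Φ : E → ℝ} {x G : E}

theorem IsSubgradientAt.norm_le (h : IsSubgradientAt Φ x G) :
    ‖G‖ ≤ Φ (x + ‖G‖⁻¹ • G) - Φ x := by
  have key := h (x + ‖G‖⁻¹ • G)
  rw [add_sub_cancel_left, real_inner_smul_right, real_inner_self_eq_norm_sq, sq, ← mul_assoc,
    inv_mul_mul_self] at key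
  linarith

theorem IsSubgradientAt.norm_sub_step_sq_add_le (h : IsSubgradientAt Φ x G) {γ : ℝ} (hγ : 0 ≤ γ)
    (w : E) :
    ‖x - (γ / ‖G‖) • G - w‖ ^ 2 + 2 * (γ / ‖G‖ * (Φ x - Φ w)) ≤ ‖x - w‖ ^ 2 + γ ^ 2 := by
  set α := γ / ‖G‖
  have hα : 0 ≤ α := by positivity
  have hdescent : Φ x - Φ w ≤ inner ℝ (x - w) G := by
    have := h w
    rw [← neg_sub, inner_neg_right, real_inner_comm] at this
    linarith
  have hlen : ‖α • G‖ ≤ γ := by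
    rw [norm_smul, Real.norm_of_nonneg hα]
    rcases eq_or_ne ‖G‖ 0 with h0 | h0
    · simp [h0, hγ]
    · exact (div_mul_cancel₀ γ h0).le
  rw [sub_right_comm, norm_sub_sq_real, real_inner_smul_right]
  nlinarith [mul_le_mul_of_nonneg_left hdescent hα, norm_nonneg (α • G)]

theorem exists_norm_le_of_isSubgradientAt [ProperSpace E] (hΦ : Continuous Φ) {s : Set E}
    (hs : Bornology.IsBounded s) :
    ∃ L, ∀ x ∈ s, ∀ G, IsSubgradientAt Φ x G → ‖G‖ ≤ L := by
  obtain ⟨C, hC⟩ := (isCompact_of_isClosed_isBounded isClosed_cthickening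
    (hs.cthickening (δ := 1))).exists_bound_of_continuousOn hΦ.continuousOn
  refine ⟨2 * C, fun x hx G hG => ?_⟩
  have hunit : dist (x + ‖G‖⁻¹ • G) x ≤ 1 := by
    rw [dist_eq_norm, add_sub_cancel_left, norm_smul, norm_inv, norm_norm]
    exact inv_mul_le_one
  have h1 := hC _ (mem_cthickening_of_dist_le _ x 1 s hx hunit)
  have h2 := hC x (self_subset_cthickening s hx)
  rw [Real.norm_eq_abs] at h1 h2
  linarith [hG.norm_le, abs_le.1 h1, abs_le.1 h2]

theorem exists_tendsto_minimizer_of_normalized_subgradient_step [ProperSpace E]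
    (hΦ : Continuous Φ) {z : E} (hz : ∀ y, Φ z ≤ Φ y) {γ : ℕ → ℝ} (hγ : ∀ k, 0 ≤ γ k)
    (hγ_not : ¬Summable γ) (hγ_sq : Summable fun k => γ k ^ 2) {x G : ℕ → E}
    (hG : ∀ k, IsSubgradientAt Φ (x k) (G k)) (hG0 : ∀ k, G k ≠ 0)
    (hx : ∀ k, x (k + 1) = x k - (γ k / ‖G k‖) • G k) :
    ∃ xs, Tendsto x atTop (𝓝 xs) ∧ ∀ y, Φ xs ≤ Φ y := by
  have hα : ∀ k, 0 ≤ γ k / ‖G k‖ := fun k => div_nonneg (hγ k) (norm_nonneg _)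
  have hfejer : ∀ w, (∀ y, Φ w ≤ Φ y) →
      (Summable fun k => γ k / ‖G k‖ * (Φ (x k) - Φ w)) ∧
        ∃ l, Tendsto (fun k => ‖x k - w‖ ^ 2) atTop (𝓝 l) := fun w hw => by
    obtain ⟨hsum, hconv⟩ := summable_and_exists_tendsto_of_succ_add_le
      (fun k => sq_nonneg ‖x k - w‖)
      (fun k => mul_nonneg zero_le_two (mul_nonneg (hα k) (sub_nonneg.2 (hw (x k)))))
      (fun k => sq_nonneg (γ k)) hγ_sq
      fun k => hx k ▸ (hG k).norm_sub_step_sq_add_le (hγ k) w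
    exact ⟨(summable_mul_left_iff two_ne_zero).1 hsum, hconv⟩
  obtain ⟨hsum, l, hl⟩ := hfejer z hz
  have hbdd : Bornology.IsBounded (Set.range x) := by
    obtain ⟨B, hB⟩ := hl.bddAbove_range
    refine (isBounded_closedBall (x := z) (r := √B)).subset ?_
    rintro _ ⟨k, rfl⟩
    rw [mem_closedBall, dist_eq_norm]
    exact (le_abs_self _).trans (Real.abs_le_sqrt (hB ⟨k, rfl⟩))
  obtain ⟨L, hL⟩ := exists_norm_le_of_isSubgradientAt hΦ hbdd
  have hα_not : ¬Summable fun k => γ k / ‖G k‖ := fun hs =>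
    hγ_not <| (hs.mul_left L).of_nonneg_of_le hγ fun k => by
      rw [mul_div_assoc', le_div_iff₀ (norm_pos_iff.2 (hG0 k))]
      nlinarith [hL _ ⟨k, rfl⟩ _ (hG k), hγ k]
  obtain ⟨xs, φ, hφ, hxφ, hxs⟩ := exists_subseq_tendsto_le_of_frequently_lt hΦ hbdd fun ε hε =>
    (frequently_lt_of_summable_mul hα hα_not hsum hε).mono fun k hk => by linarith
  have hmin : ∀ y, Φ xs ≤ Φ y := fun y => hxs.trans (hz y)
  obtain ⟨-, l', hl'⟩ := hfejer xs hmin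
  refine ⟨xs, tendsto_of_tendsto_dist_of_subseq (l := √l') ?_ hφ.tendsto_atTop hxφ, hmin⟩
  simpa [dist_eq_norm] using hl'.sqrt

end Subgradient

theorem max_zero_add_ite_le {α : Type*} [AddCommGroup α] [LinearOrder α] [IsOrderedAddMonoid α]
    {a b d : α} (h : a + d ≤ b) : max a 0 + (if 0 < a then d else 0) ≤ max b 0 := by
  split_ifs with ha
  · rw [max_eq_left ha.le]
    exact h.trans (le_max_left b 0)
  · rw [max_eq_right (not_lt.1 ha), add_zero]
    exact le_max_right b 0

theorem sum_sum_filter_ne_swap {ι M : Type*} [Fintype ι] [DecidableEq ι] [AddCommMonoid M]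
    (F : ι → ι → M) :
    ∑ i, ∑ j ∈ univ.filter (fun j => j ≠ i), F j i
      = ∑ i, ∑ j ∈ univ.filter (fun j => j ≠ i), F i j := by
  simp only [sum_filter]
  rw [sum_comm]
  simp only [ne_comm]

theorem ConvexOn.add_deriv_mul_sub_le {S : Set ℝ} {f : ℝ → ℝ} (hf : ConvexOn ℝ S f) {a b : ℝ}
    (ha : a ∈ S) (hb : b ∈ S) (hd : DifferentiableAt ℝ f a) :
    f a + deriv f a * (b - a) ≤ f b := by
  rcases lt_trichotomy a b with hab | rfl | hab
  · have := hf.deriv_le_slope ha hb hab hd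
    rw [slope_def_field, le_div_iff₀ (sub_pos.2 hab)] at this
    linarith
  · simp
  · have := hf.slope_le_deriv hb ha hab hd
    rw [slope_def_field, div_le_iff₀ (sub_pos.2 hab)] at this
    linarith

theorem ConvexOn.add_fderiv_sub_le {E : Type*} [NormedAddCommGroup E] [NormedSpace ℝ E]
    {φ : E → ℝ} (hφ : ConvexOn ℝ Set.univ φ) {p : E} (hd : DifferentiableAt ℝ φ p) (q : E) :
    φ p + fderiv ℝ φ p (q - p) ≤ φ q := by
  have hline : HasDerivAt (φ ∘ AffineMap.lineMap (k := ℝ) p q) (fderiv ℝ φ p (q - p)) 0 :=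
    hd.hasFDerivAt.comp_hasDerivAt_of_eq 0 AffineMap.hasDerivAt_lineMap (by simp)
  have hconv : ConvexOn ℝ Set.univ (φ ∘ AffineMap.lineMap (k := ℝ) p q) := by
    simpa using hφ.comp_affineMap (AffineMap.lineMap p q)
  simpa [hline.deriv] using
    hconv.add_deriv_mul_sub_le (Set.mem_univ 0) (Set.mem_univ 1) hline.differentiableAt

theorem fderiv_uncurry_apply {h : ℝ → ℝ → ℝ} {a b : ℝ}
    (hd : DifferentiableAt ℝ (fun p : ℝ × ℝ => h p.1 p.2) (a, b)) (u v : ℝ) :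
    fderiv ℝ (fun p : ℝ × ℝ => h p.1 p.2) (a, b) (u, v)
      = deriv (fun t => h t b) a * u + deriv (fun t => h a t) b * v := by
  have h₁ : deriv (fun t => h t b) a = fderiv ℝ (fun p : ℝ × ℝ => h p.1 p.2) (a, b) (1, 0) := by
    exact (hd.hasFDerivAt.comp_hasDerivAt a ((hasDerivAt_id a).prodMk (hasDerivAt_const a b))).deriv
  have h₂ : deriv (fun t => h a t) b = fderiv ℝ (fun p : ℝ × ℝ => h p.1 p.2) (a, b) (0, 1) := by
    exact (hd.hasFDerivAt.comp_hasDerivAt b ((hasDerivAt_const b a).prodMk (hasDerivAt_id b))).deriv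
  have hdecomp : ((u, v) : ℝ × ℝ) = u • ((1 : ℝ), (0 : ℝ)) + v • ((0 : ℝ), (1 : ℝ)) := by
    ext <;> simp
  rw [h₁, h₂, hdecomp, map_add, map_smul, map_smul, smul_eq_mul, smul_eq_mul, mul_comm u,
    mul_comm v]

theorem ConvexOn.add_partialDerivs_le {h : ℝ → ℝ → ℝ}
    (hc : ConvexOn ℝ Set.univ (fun p : ℝ × ℝ => h p.1 p.2)) {a b : ℝ}
    (hd : DifferentiableAt ℝ (fun p : ℝ × ℝ => h p.1 p.2) (a, b)) (a' b' : ℝ) :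
    h a b + (deriv (fun t => h t b) a * (a' - a) + deriv (fun t => h a t) b * (b' - b))
      ≤ h a' b' := by
  have := hc.add_fderiv_sub_le hd (a', b')
  rwa [Prod.mk_sub_mk, fderiv_uncurry_apply hd] at this

theorem max_zero_add_active_partials_le {h h' : ℝ → ℝ → ℝ}
    (hc : ConvexOn ℝ Set.univ (fun p : ℝ × ℝ => h p.1 p.2)) {a b : ℝ}
    (hd : DifferentiableAt ℝ (fun p : ℝ × ℝ => h p.1 p.2) (a, b)) (hsym : ∀ s t, h s t = h' t s)
    (a' b' : ℝ) :
    max (h a b) 0 + ((if 0 < h a b then deriv (fun t => h t b) a * (a' - a) else 0)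
        + (if 0 < h' b a then deriv (fun t => h' t a) b * (b' - b) else 0))
      ≤ max (h a' b') 0 := by
  obtain rfl : h' = fun t s => h s t := funext₂ fun t s => (hsym s t).symm
  rw [ite_add_ite, add_zero]
  exact max_zero_add_ite_le (hc.add_partialDerivs_le hd a' b')

section Network

variable {n : ℕ}

noncomputable def objective (f : Fin n → ℝ → ℝ) (g : Fin n → Fin n → ℝ → ℝ → ℝ)
    (y : EuclideanSpace ℝ (Fin n)) : ℝ :=
  ∑ i, f i (y i) + (1/2) * ∑ i, ∑ j ∈ Finset.univ.filter (fun j => j ≠ i),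
    max (g i j (y i) (y j)) 0

noncomputable def objectiveSubgradient (f : Fin n → ℝ → ℝ) (g : Fin n → Fin n → ℝ → ℝ → ℝ)
    (v : EuclideanSpace ℝ (Fin n)) : EuclideanSpace ℝ (Fin n) :=
  WithLp.toLp 2 fun i => deriv (f i) (v i) +
    ∑ j ∈ Finset.univ.filter (fun j => j ≠ i ∧ 0 < g i j (v i) (v j)),
      deriv (fun t => g i j t (v j)) (v i)

variable {f : Fin n → ℝ → ℝ} {g : Fin n → Fin n → ℝ → ℝ → ℝ}

theorem continuous_objective (hf : ∀ i, Continuous (f i))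
    (hg : ∀ i j, i ≠ j → Continuous (fun p : ℝ × ℝ => g i j p.1 p.2)) :
    Continuous (objective f g) := by
  have hproj : ∀ i, Continuous fun y : EuclideanSpace ℝ (Fin n) => y i :=
    fun i => (EuclideanSpace.proj i).continuous
  refine (continuous_finsetSum _ fun i _ => (hf i).comp (hproj i)).add
    (continuous_const.mul (continuous_finsetSum _ fun i _ => continuous_finsetSum _ fun j hj => ?_))
  exact ((hg i j (Ne.symm (mem_filter.1 hj).2)).comp ((hproj i).prodMk (hproj j))).max
    continuous_const

theorem isSubgradientAt_objectiveSubgradient (hfc : ∀ i, ConvexOn ℝ Set.univ (f i))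
    (hfd : ∀ i, Differentiable ℝ (f i))
    (hgc : ∀ i j, i ≠ j → ConvexOn ℝ Set.univ (fun p : ℝ × ℝ => g i j p.1 p.2))
    (hgd : ∀ i j, i ≠ j → Differentiable ℝ (fun p : ℝ × ℝ => g i j p.1 p.2))
    (hsym : ∀ i j a b, i ≠ j → g i j a b = g j i b a) (v : EuclideanSpace ℝ (Fin n)) :
    IsSubgradientAt (objective f g) v (objectiveSubgradient f g v) := by
  intro y
  set c : Fin n → Fin n → ℝ := fun i j =>
    if 0 < g i j (v i) (v j) then deriv (fun t => g i j t (v j)) (v i) * (y i - v i) else 0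
  have hinner : inner ℝ (objectiveSubgradient f g v) (y - v)
      = ∑ i, deriv (f i) (v i) * (y i - v i) + ∑ i, ∑ j ∈ univ.filter (fun j => j ≠ i), c i j := by
    rw [← sum_add_distrib, PiLp.inner_apply]
    refine sum_congr rfl fun i _ => ?_
    rw [PiLp.sub_apply, Real.inner_apply, objectiveSubgradient, add_mul, sum_mul, ← filter_filter,
      sum_filter]
  have hf : ∑ i, f i (v i) + ∑ i, deriv (f i) (v i) * (y i - v i) ≤ ∑ i, f i (y i) := by
    rw [← sum_add_distrib]
    exact sum_le_sum fun i _ =>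
      (hfc i).add_deriv_mul_sub_le (Set.mem_univ _) (Set.mem_univ _) (hfd i _)
  have hpairs : ∑ i, ∑ j ∈ univ.filter (fun j => j ≠ i), max (g i j (v i) (v j)) 0
      + (∑ i, ∑ j ∈ univ.filter (fun j => j ≠ i), c i j
        + ∑ i, ∑ j ∈ univ.filter (fun j => j ≠ i), c j i)
      ≤ ∑ i, ∑ j ∈ univ.filter (fun j => j ≠ i), max (g i j (y i) (y j)) 0 := by
    simp only [← sum_add_distrib]
    refine sum_le_sum fun i _ => sum_le_sum fun j hj => ?_
    have hij : i ≠ j := Ne.symm (mem_filter.1 hj).2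
    exact max_zero_add_active_partials_le (hgc i j hij) (hgd i j hij _)
      (fun s t => hsym i j s t hij) _ _
  rw [sum_sum_filter_ne_swap c] at hpairs
  unfold objective
  rw [hinner]
  linarith

end Network

theorem normalized_subgradient_dynamics_converge_general
    (n : ℕ) (f : Fin n → ℝ → ℝ) (g : Fin n → Fin n → ℝ → ℝ → ℝ)
    (hfc : ∀ i, ConvexOn ℝ Set.univ (f i)) (hfd : ∀ i, Differentiable ℝ (f i))
    (hgc : ∀ i j, i ≠ j → ConvexOn ℝ Set.univ (fun p : ℝ × ℝ => g i j p.1 p.2))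
    (hgd : ∀ i j, i ≠ j → Differentiable ℝ (fun p : ℝ × ℝ => g i j p.1 p.2))
    (hsym : ∀ i j a b, i ≠ j → g i j a b = g j i b a)
    (hmin : ∃ z : EuclideanSpace ℝ (Fin n), ∀ y : EuclideanSpace ℝ (Fin n),
      (∑ i, f i (z i) + (1/2) * ∑ i, ∑ j ∈ Finset.univ.filter (fun j => j ≠ i),
          max (g i j (z i) (z j)) 0)
      ≤ ∑ i, f i (y i) + (1/2) * ∑ i, ∑ j ∈ Finset.univ.filter (fun j => j ≠ i),
          max (g i j (y i) (y j)) 0)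
    (γ : ℕ → ℝ) (hγpos : ∀ k, 0 < γ k)
    (hγdiv : Tendsto (fun K => ∑ k ∈ Finset.range K, γ k) atTop atTop)
    (hγsq : Summable (fun k => (γ k)^2))
    (x : ℕ → EuclideanSpace ℝ (Fin n)) (gk : ℕ → EuclideanSpace ℝ (Fin n))
    (hgk : ∀ k i, gk k i = deriv (f i) (x k i) +
      ∑ j ∈ Finset.univ.filter (fun j => j ≠ i ∧ 0 < g i j (x k i) (x k j)),
        deriv (fun t => g i j t (x k j)) (x k i))
    (hgknz : ∀ k, gk k ≠ 0)
    (hdyn : ∀ k, x (k + 1) = x k - (γ k / ‖gk k‖) • gk k) :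
    ∃ xs : EuclideanSpace ℝ (Fin n), Tendsto x atTop (nhds xs) ∧
      ∀ y : EuclideanSpace ℝ (Fin n),
        (∑ i, f i (xs i) + (1/2) * ∑ i, ∑ j ∈ Finset.univ.filter (fun j => j ≠ i),
            max (g i j (xs i) (xs j)) 0)
        ≤ ∑ i, f i (y i) + (1/2) * ∑ i, ∑ j ∈ Finset.univ.filter (fun j => j ≠ i),
            max (g i j (y i) (y j)) 0 := by
  obtain ⟨z, hz⟩ := hmin
  have hγ : ∀ k, 0 ≤ γ k := fun k => (hγpos k).le
  have hgk_eq : ∀ k, gk k = objectiveSubgradient f g (x k) := fun k => by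
    ext i
    exact hgk k i
  exact exists_tendsto_minimizer_of_normalized_subgradient_step
    (continuous_objective (fun i => (hfd i).continuous) fun i j hij => (hgd i j hij).continuous) hz
    hγ ((not_summable_iff_tendsto_nat_atTop_of_nonneg hγ).2 hγdiv) hγsq
    (fun k => hgk_eq k ▸ isSubgradientAt_objectiveSubgradient hfc hfd hgc hgd hsym (x k))
    hgknz hdyn

/-- normalized subgradient method: the saddle-point dynamics with
normalized diminishing, non-summable, square-summable step sizes converge to a
global minimizer of `Φ(x) = ∑ᵢ fᵢ(xᵢ) + ½ ∑_{i≠j} max{g_ij(xᵢ,xⱼ), 0}`. -/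
theorem normalized_subgradient_dynamics_converge
    (n : ℕ) (f : Fin n → ℝ → ℝ) (g : Fin n → Fin n → ℝ → ℝ → ℝ)
    (hfc : ∀ i, ConvexOn ℝ Set.univ (f i)) (hfd : ∀ i, Differentiable ℝ (f i))
    (hgc : ∀ i j, i ≠ j → ConvexOn ℝ Set.univ (fun p : ℝ × ℝ => g i j p.1 p.2))
    (hgd : ∀ i j, i ≠ j → Differentiable ℝ (fun p : ℝ × ℝ => g i j p.1 p.2))
    (hsym : ∀ i j a b, i ≠ j → g i j a b = g j i b a)
    (hmin : ∃ z : EuclideanSpace ℝ (Fin n), ∀ y : EuclideanSpace ℝ (Fin n),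
      (∑ i, f i (z i) + (1/2) * ∑ i, ∑ j ∈ Finset.univ.filter (fun j => j ≠ i),
          max (g i j (z i) (z j)) 0)
      ≤ ∑ i, f i (y i) + (1/2) * ∑ i, ∑ j ∈ Finset.univ.filter (fun j => j ≠ i),
          max (g i j (y i) (y j)) 0)
    (γ : ℕ → ℝ) (hγpos : ∀ k, 0 < γ k)
    (hγ0 : Tendsto γ atTop (nhds 0))
    (hγdiv : Tendsto (fun K => ∑ k ∈ Finset.range K, γ k) atTop atTop)
    (hγsq : Summable (fun k => (γ k)^2))
    (x : ℕ → EuclideanSpace ℝ (Fin n)) (gk : ℕ → EuclideanSpace ℝ (Fin n))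
    (hgk : ∀ k i, gk k i = deriv (f i) (x k i) +
      ∑ j ∈ Finset.univ.filter (fun j => j ≠ i ∧ 0 < g i j (x k i) (x k j)),
        deriv (fun t => g i j t (x k j)) (x k i))
    (hgknz : ∀ k, gk k ≠ 0)
    (hdyn : ∀ k, x (k + 1) = x k - (γ k / ‖gk k‖) • gk k) :
    ∃ xs : EuclideanSpace ℝ (Fin n), Tendsto x atTop (nhds xs) ∧
      ∀ y : EuclideanSpace ℝ (Fin n),
        (∑ i, f i (xs i) + (1/2) * ∑ i, ∑ j ∈ Finset.univ.filter (fun j => j ≠ i),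
            max (g i j (xs i) (xs j)) 0)
        ≤ ∑ i, f i (y i) + (1/2) * ∑ i, ∑ j ∈ Finset.univ.filter (fun j => j ≠ i),
            max (g i j (y i) (y j)) 0 :=
  normalized_subgradient_dynamics_converge_general n f g hfc hfd hgc hgd hsym hmin γ hγpos hγdiv
    hγsq x gk hgk hgknz hdyn
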